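/- Upper bound on the completely bounded trace norm from a Stinespring pair: Let X, Y, Z be finite-dimensional complex vector spaces and let A, B ∈ L(X, Y⊗Z) be a Stinespring pair for a super-operator Φ : L(X) → L(Y), meaning Φ(X) = Tr_Z(A X B*) for all X ∈ L(X). Then |||Φ|||₁ ≤ ‖A‖_∞ · ‖B‖_∞, where ‖·‖_∞ denotes the spectral norm. -/

import Mathlib

open Matrix
open scoped Kronecker ComplexOrder

noncomputable section

/-- The square root of a positive semidefinite matrix, as `Matrix.PosSemidef.sqrt` was defined
in the older Mathlib (removed since). -/
def Matrix.PosSemidef.sqrt {n : Type*} [Fintype n] [DecidableEq n] {A : Matrix n n ℂ}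
    (hA : A.PosSemidef) : Matrix n n ℂ :=
  (hA.1.eigenvectorUnitary : Matrix n n ℂ) * diagonal ((↑) ∘ (√·) ∘ hA.1.eigenvalues) *
    (star hA.1.eigenvectorUnitary : Matrix n n ℂ)

/-- The trace norm `‖A‖₁ = Tr √(A* A)`. -/
def traceNorm {m n : Type*} [Fintype m] [Fintype n] [DecidableEq n]
    (A : Matrix m n ℂ) : ℝ :=
  (Matrix.posSemidef_conjTranspose_mul_self A).sqrt.trace.re

/-- The spectral norm (operator norm w.r.t. Euclidean norms). -/
def specNorm {m n : Type*} [Fintype m] [Fintype n] [DecidableEq n]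
    (A : Matrix m n ℂ) : ℝ :=
  ‖LinearMap.toContinuousLinearMap (Matrix.toEuclideanLin A)‖

/-- The Frobenius norm `‖A‖₂ = √Tr(A*A)`. -/
def frobeniusNorm {m n : Type*} [Fintype m] [Fintype n] (A : Matrix m n ℂ) : ℝ :=
  Real.sqrt ((Aᴴ * A).trace.re)

/-- Partial trace over the first tensor factor. -/
def ptraceFst {y z : Type*} [Fintype y] (M : Matrix (y × z) (y × z) ℂ) : Matrix z z ℂ :=
  Matrix.of fun a b => ∑ i, M (i, a) (i, b)

/-- Partial trace over the second tensor factor. -/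
def ptraceSnd {y z : Type*} [Fintype z] (M : Matrix (y × z) (y × z) ℂ) : Matrix y y ℂ :=
  Matrix.of fun i j => ∑ a, M (i, a) (j, a)

/-- The super-operator `Φ ⊗ 1_{L(W)}`, for `Φ : L(X) → L(Y)` and `W` indexed by `k`. -/
def tensorId {n m : Type*} [Fintype n] [Fintype m] (k : Type*) [Fintype k]
    (Φ : Matrix n n ℂ →ₗ[ℂ] Matrix m m ℂ) :
    Matrix (n × k) (n × k) ℂ →ₗ[ℂ] Matrix (m × k) (m × k) ℂ where
  toFun M := Matrix.of fun p q => Φ (Matrix.of fun i j => M (i, p.2) (j, q.2)) p.1 q.1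
  map_add' M N := by
    ext p q
    show Φ (Matrix.of fun i j => (M + N) (i, p.2) (j, q.2)) p.1 q.1 =
      Φ (Matrix.of fun i j => M (i, p.2) (j, q.2)) p.1 q.1 +
        Φ (Matrix.of fun i j => N (i, p.2) (j, q.2)) p.1 q.1
    have h : (Matrix.of fun i j => (M + N) (i, p.2) (j, q.2)) =
        (Matrix.of fun i j => M (i, p.2) (j, q.2)) +
          (Matrix.of fun i j => N (i, p.2) (j, q.2)) := rfl
    rw [h, map_add]; rfl
  map_smul' c M := by
    ext p q
    show Φ (Matrix.of fun i j => (c • M) (i, p.2) (j, q.2)) p.1 q.1 =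
      (c • Φ (Matrix.of fun i j => M (i, p.2) (j, q.2))) p.1 q.1
    have h : (Matrix.of fun i j => (c • M) (i, p.2) (j, q.2)) =
        c • (Matrix.of fun i j => M (i, p.2) (j, q.2)) := rfl
    rw [h, _root_.map_smul]

/-- The trace norm induced on super-operators. -/
def inducedTraceNorm {a b : Type*} [Fintype a] [DecidableEq a] [Fintype b] [DecidableEq b]
    (Φ : Matrix a a ℂ →ₗ[ℂ] Matrix b b ℂ) : ℝ :=
  sSup {x : ℝ | ∃ X : Matrix a a ℂ, traceNorm X ≤ 1 ∧ x = traceNorm (Φ X)}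

/-- The completely bounded trace norm (diamond norm):
`sup over k ≥ 1 of ‖Φ ⊗ 1_{L(ℂᵏ)}‖₁`. -/
def diamondNorm {n m : Type*} [Fintype n] [DecidableEq n] [Fintype m] [DecidableEq m]
    (Φ : Matrix n n ℂ →ₗ[ℂ] Matrix m m ℂ) : ℝ :=
  ⨆ k : ℕ, inducedTraceNorm (tensorId (Fin (k + 1)) Φ)


/-- Choi–Jamiołkowski representation `J(Φ) = Σ_{i,j} Φ(E_{i,j}) ⊗ E_{i,j}`. -/
def choi {n m : Type*} [Fintype n] [DecidableEq n] [Fintype m]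
    (Φ : Matrix n n ℂ →ₗ[ℂ] Matrix m m ℂ) : Matrix (m × n) (m × n) ℂ :=
  ∑ i : n, ∑ j : n, (Φ (Matrix.single i j 1)) ⊗ₖ (Matrix.single i j 1)

/-- A quantum channel: a completely positive and trace-preserving super-operator. -/
def IsQuantumChannel {n m : Type*} [Fintype n] [Fintype m]
    (Φ : Matrix n n ℂ →ₗ[ℂ] Matrix m m ℂ) : Prop :=
  (∀ (k : ℕ) (P : Matrix (n × Fin k) (n × Fin k) ℂ), P.PosSemidef →
      (tensorId (Fin k) Φ P).PosSemidef) ∧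
    ∀ X : Matrix n n ℂ, (Φ X).trace = X.trace

open Classical in
/-- Square root of a positive semidefinite matrix (junk value `0` otherwise). -/
def matSqrt {r : Type*} [Fintype r] [DecidableEq r] (P : Matrix r r ℂ) : Matrix r r ℂ :=
  if h : P.PosSemidef then h.sqrt else 0

/-- The fidelity `F(P,Q) = ‖√P √Q‖₁`. -/
def fidelity {r : Type*} [Fintype r] [DecidableEq r] (P Q : Matrix r r ℂ) : ℝ :=
  traceNorm (matSqrt P * matSqrt Q)

/-! The trace norm is dual to the spectral norm: the polar decomposition `N = W |N|` with
`‖W‖ ≤ 1` gives `‖N‖₁ = Re Tr (W* N)`, and conversely `|Tr (C X)| ≤ ‖C‖ ‖X‖₁`. For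
`N = Tr_Z (A X B*)` one has `Tr (W* N) = Tr (B* (W ⊗ 1)* A X)`, so `‖N‖₁ ≤ ‖A‖ ‖B‖ ‖X‖₁`.
The amplification `Φ ⊗ 1` has the Stinespring pair `(A ⊗ 1, B ⊗ 1)` (up to reordering the
tensor factors), and `X ↦ X ⊗ 1` is a *-homomorphism, hence contractive, so the same bound holds
for every `k`. -/

open scoped Matrix.Norms.L2Operator

namespace Matrix

theorem norm_apply_le_l2_opNorm {m n : Type*} [Fintype m] [Fintype n] [DecidableEq n]
    (A : Matrix m n ℂ) (i : m) (j : n) : ‖A i j‖ ≤ ‖A‖ := by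
  calc ‖A i j‖ = ‖(EuclideanSpace.equiv m ℂ).symm (A *ᵥ EuclideanSpace.single j 1) i‖ := by
        simp
    _ ≤ ‖(EuclideanSpace.equiv m ℂ).symm (A *ᵥ EuclideanSpace.single j 1)‖ :=
        PiLp.norm_apply_le _ _
    _ ≤ ‖A‖ * ‖EuclideanSpace.single j (1 : ℂ)‖ := l2_opNorm_mulVec A _
    _ = ‖A‖ := by simp

theorem l2_opNorm_submatrix_equiv {α α' β : Type*} [Fintype α] [Fintype α'] [Fintype β]
    [DecidableEq β] (A : Matrix α β ℂ) (e : α' ≃ α) : ‖A.submatrix e id‖ = ‖A‖ := by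
  have h : (A.submatrix e id)ᴴ * A.submatrix e id = Aᴴ * A := by
    rw [conjTranspose_submatrix, submatrix_mul_equiv, submatrix_id_id]
  have := congrArg norm h
  rw [l2_opNorm_conjTranspose_mul_self, l2_opNorm_conjTranspose_mul_self] at this
  exact (mul_self_inj (norm_nonneg _) (norm_nonneg _)).mp this

def kroneckerOneStarAlgHom (β γ : Type*) [Fintype β] [Fintype γ] [DecidableEq β]
    [DecidableEq γ] : Matrix β β ℂ →⋆ₐ[ℂ] Matrix (β × γ) (β × γ) ℂ where
  toFun X := X ⊗ₖ 1
  map_one' := one_kronecker_one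
  map_mul' X Y := by rw [← mul_kronecker_mul, one_mul]
  map_zero' := zero_kronecker _
  map_add' X Y := add_kronecker _ _ _
  commutes' c := by
    simp only [Algebra.algebraMap_eq_smul_one, smul_kronecker, one_kronecker_one]
  map_star' X := by
    simp [star_eq_conjTranspose, conjTranspose_kronecker]

theorem l2_opNorm_kronecker_one_le {α β γ : Type*} [Fintype α] [Fintype β] [Fintype γ]
    [DecidableEq β] [DecidableEq γ] (A : Matrix α β ℂ) :
    ‖A ⊗ₖ (1 : Matrix γ γ ℂ)‖ ≤ ‖A‖ := by
  have h : ‖(Aᴴ * A) ⊗ₖ (1 : Matrix γ γ ℂ)‖ ≤ ‖Aᴴ * A‖ :=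
    NonUnitalStarAlgHom.norm_apply_le (kroneckerOneStarAlgHom β γ) (Aᴴ * A)
  rw [show (Aᴴ * A) ⊗ₖ (1 : Matrix γ γ ℂ) = (A ⊗ₖ 1)ᴴ * (A ⊗ₖ 1) by
      rw [conjTranspose_kronecker, conjTranspose_one (n := γ), ← mul_kronecker_mul, one_mul],
    l2_opNorm_conjTranspose_mul_self, l2_opNorm_conjTranspose_mul_self] at h
  exact (mul_self_le_mul_self_iff (norm_nonneg _) (norm_nonneg _)).mpr h

variable {ι : Type*} [Fintype ι] [DecidableEq ι]

theorem PosSemidef.sqrt_eq_cfc {P : Matrix ι ι ℂ} (hP : P.PosSemidef) :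
    hP.sqrt = cfc Real.sqrt P := by
  rw [hP.1.cfc_eq]; rfl

open scoped MatrixOrder in
theorem posSemidef_cfc {f : ℝ → ℝ} (hf : ∀ x, 0 ≤ f x) (P : Matrix ι ι ℂ) :
    (cfc f P).PosSemidef :=
  nonneg_iff_posSemidef.mp (cfc_nonneg fun x _ => hf x)

theorem cfc_mul_cfc (P : Matrix ι ι ℂ) (f g : ℝ → ℝ) :
    cfc f P * cfc g P = cfc (fun x => f x * g x) P :=
  (cfc_mul f g P (P.finite_real_spectrum.continuousOn _)
    (P.finite_real_spectrum.continuousOn _)).symm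

theorem cfc_mul_self {P : Matrix ι ι ℂ} (hP : P.IsHermitian) (f : ℝ → ℝ) :
    cfc f P * P = cfc (fun x => f x * x) P := by
  conv_lhs => enter [2]; rw [← cfc_id' ℝ P hP]
  exact cfc_mul_cfc P f _

/-- The witness is `W = N (N* N)^{-1/2}`, where the inverse square root is taken on the
support of `N* N`: the junk value `(√x)⁻¹ = 0` for `x ≤ 0` makes this a single `cfc`. -/
theorem exists_polar_decomposition (N : Matrix ι ι ℂ) :
    ∃ W : Matrix ι ι ℂ, ‖W‖ ≤ 1 ∧ Wᴴ * N = cfc Real.sqrt (Nᴴ * N) ∧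
      N = W * cfc Real.sqrt (Nᴴ * N) := by
  set P := Nᴴ * N with hPdef
  have hP : P.PosSemidef := posSemidef_conjTranspose_mul_self N
  set G := cfc (fun x : ℝ => (√x)⁻¹) P
  have hG : Gᴴ = G := (cfc_predicate _ P : IsSelfAdjoint G)
  refine ⟨N * G, ?_, ?_, ?_⟩
  · have hWW : ‖(N * G)ᴴ * (N * G)‖ ≤ 1 := by
      rw [conjTranspose_mul, mul_assoc, ← mul_assoc Nᴴ, ← mul_assoc, ← hPdef, hG,
        cfc_mul_self hP.1, cfc_mul_cfc]
      refine norm_cfc_le zero_le_one fun x _ => ?_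
      rw [inv_mul_eq_div, Real.div_sqrt]
      by_cases hx : √x = 0 <;> simp [hx]
    rw [l2_opNorm_conjTranspose_mul_self] at hWW
    nlinarith [norm_nonneg (N * G)]
  · rw [conjTranspose_mul, mul_assoc, hG, ← hPdef, cfc_mul_self hP.1]
    congr 1; funext x
    rw [inv_mul_eq_div, Real.div_sqrt]
  · set R := cfc (fun x => 1 - (√x)⁻¹ * √x) P
    have hNR : N * R = 0 := by
      have hRPR : Rᴴ * P * R = 0 := by
        rw [show Rᴴ = R from (cfc_predicate _ P : IsSelfAdjoint R), cfc_mul_self hP.1, cfc_mul_cfc,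
          ← cfc_zero ℝ P]
        refine cfc_congr fun x hx => ?_
        obtain ⟨i, rfl⟩ := hP.1.spectrum_real_eq_range_eigenvalues ▸ hx
        by_cases hx0 : √(hP.1.eigenvalues i) = 0
        · simp [(Real.sqrt_eq_zero (hP.eigenvalues_nonneg i)).mp hx0]
        · simp [hx0]
      rw [← conjTranspose_mul_self_eq_zero, conjTranspose_mul, mul_assoc, ← mul_assoc Nᴴ,
        ← mul_assoc, hRPR]
    calc N = N * (cfc (fun x => (√x)⁻¹ * √x) P + R) := by
          rw [← cfc_add (a := P) _ _ (P.finite_real_spectrum.continuousOn _)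
            (P.finite_real_spectrum.continuousOn _)]
          simp only [add_sub_cancel]
          rw [show cfc (fun _ : ℝ => (1 : ℝ)) P = 1 from cfc_const_one ℝ P hP.1, mul_one]
      _ = N * G * cfc Real.sqrt P := by rw [mul_add, hNR, add_zero, mul_assoc, cfc_mul_cfc P]

theorem PosSemidef.norm_trace_mul_le {P : Matrix ι ι ℂ} (hP : P.PosSemidef) (C : Matrix ι ι ℂ) :
    ‖(C * P).trace‖ ≤ ‖C‖ * P.trace.re := by
  set U := hP.1.eigenvectorUnitary
  set d := hP.1.eigenvalues
  have hd : ∀ i, 0 ≤ d i := hP.eigenvalues_nonneg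
  have hCU : ‖(star U : Matrix ι ι ℂ) * C * U‖ = ‖C‖ := by
    rw [CStarRing.norm_mul_coe_unitary, ← Unitary.coe_star, CStarRing.norm_coe_unitary_mul]
  have htrace : (C * P).trace = ∑ i, ((star U : Matrix ι ι ℂ) * C * U) i i * d i := by
    conv_lhs => rw [hP.1.spectral_theorem, Unitary.conjStarAlgAut_apply, ← mul_assoc,
      ← mul_assoc, trace_mul_comm, ← mul_assoc, ← mul_assoc]
    simp [trace, mul_diagonal, U, d]
  have htraceP : P.trace.re = ∑ i, d i := by
    simp [hP.1.trace_eq_sum_eigenvalues, Complex.re_sum, d]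
  rw [htrace, htraceP, Finset.mul_sum]
  refine (norm_sum_le _ _).trans (Finset.sum_le_sum fun i _ => ?_)
  rw [norm_mul, Complex.norm_real, Real.norm_of_nonneg (hd i)]
  exact mul_le_mul_of_nonneg_right (hCU ▸ norm_apply_le_l2_opNorm _ i i) (hd i)

end Matrix

theorem traceNorm_eq_re_trace_cfc {m n : Type*} [Fintype m] [Fintype n] [DecidableEq n]
    (A : Matrix m n ℂ) : traceNorm A = (cfc Real.sqrt (Aᴴ * A)).trace.re := by
  rw [traceNorm, PosSemidef.sqrt_eq_cfc]

theorem traceNorm_nonneg {m n : Type*} [Fintype m] [Fintype n] [DecidableEq n]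
    (A : Matrix m n ℂ) : 0 ≤ traceNorm A := by
  rw [traceNorm_eq_re_trace_cfc]
  exact (Complex.nonneg_iff.mp (posSemidef_cfc Real.sqrt_nonneg _).trace_nonneg).1

theorem exists_traceNorm_eq_re_trace {ι : Type*} [Fintype ι] [DecidableEq ι]
    (N : Matrix ι ι ℂ) : ∃ W : Matrix ι ι ℂ, ‖W‖ ≤ 1 ∧ traceNorm N = (Wᴴ * N).trace.re := by
  obtain ⟨W, hW, hWN, -⟩ := N.exists_polar_decomposition
  exact ⟨W, hW, by rw [hWN, traceNorm_eq_re_trace_cfc]⟩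

theorem norm_trace_mul_le_traceNorm {ι : Type*} [Fintype ι] [DecidableEq ι]
    (C M : Matrix ι ι ℂ) : ‖(C * M).trace‖ ≤ ‖C‖ * traceNorm M := by
  obtain ⟨V, hV, -, hMV⟩ := M.exists_polar_decomposition
  calc ‖(C * M).trace‖ = ‖(C * V * cfc Real.sqrt (Mᴴ * M)).trace‖ := by
        rw [mul_assoc, ← hMV]
    _ ≤ ‖C * V‖ * traceNorm M := by
        rw [traceNorm_eq_re_trace_cfc]
        exact (posSemidef_cfc Real.sqrt_nonneg _).norm_trace_mul_le _
    _ ≤ ‖C‖ * traceNorm M := by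
        gcongr
        · exact traceNorm_nonneg M
        · simpa using (C.l2_opNorm_mul V).trans (mul_le_mul_of_nonneg_left hV (norm_nonneg C))

def Equiv.prodRightComm (α β γ : Type*) : (α × β) × γ ≃ (α × γ) × β where
  toFun x := ((x.1.1, x.2), x.1.2)
  invFun x := ((x.1.1, x.2), x.1.2)
  left_inv _ := rfl
  right_inv _ := rfl

section PartialTrace
variable {α β γ κ : Type*} [Fintype α] [Fintype β] [Fintype γ] [Fintype κ]

theorem trace_mul_ptraceSnd [DecidableEq γ] (W : Matrix α α ℂ)
    (K : Matrix (α × γ) (α × γ) ℂ) :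
    (W * ptraceSnd K).trace = ((W ⊗ₖ (1 : Matrix γ γ ℂ)) * K).trace := by
  simp only [trace, diag, mul_apply, ptraceSnd, of_apply, kronecker_apply, one_apply,
    Fintype.sum_prod_type, Finset.mul_sum, mul_ite, mul_one, mul_zero, ite_mul, zero_mul,
    Finset.sum_ite_eq, Finset.mem_univ, if_true]
  exact Finset.sum_congr rfl fun _ _ => Finset.sum_comm

theorem traceNorm_ptraceSnd_le [DecidableEq α] [DecidableEq β] [DecidableEq γ]
    (A B : Matrix (α × γ) β ℂ) (M : Matrix β β ℂ) :
    traceNorm (ptraceSnd (A * M * Bᴴ)) ≤ ‖A‖ * ‖B‖ * traceNorm M := by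
  obtain ⟨W, hW, hN⟩ := exists_traceNorm_eq_re_trace (ptraceSnd (A * M * Bᴴ))
  have hC : ‖Bᴴ * (Wᴴ ⊗ₖ (1 : Matrix γ γ ℂ)) * A‖ ≤ ‖A‖ * ‖B‖ := by
    have hWk : ‖Wᴴ ⊗ₖ (1 : Matrix γ γ ℂ)‖ ≤ 1 :=
      (l2_opNorm_kronecker_one_le _).trans (by rwa [l2_opNorm_conjTranspose])
    calc ‖Bᴴ * (Wᴴ ⊗ₖ (1 : Matrix γ γ ℂ)) * A‖
        ≤ ‖Bᴴ‖ * ‖Wᴴ ⊗ₖ (1 : Matrix γ γ ℂ)‖ * ‖A‖ :=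
          (l2_opNorm_mul _ _).trans (by gcongr; exact l2_opNorm_mul _ _)
      _ ≤ ‖B‖ * 1 * ‖A‖ := by rw [l2_opNorm_conjTranspose]; gcongr
      _ = ‖A‖ * ‖B‖ := by ring
  calc traceNorm (ptraceSnd (A * M * Bᴴ)) ≤ ‖(Wᴴ * ptraceSnd (A * M * Bᴴ)).trace‖ :=
        hN ▸ Complex.re_le_norm _
    _ = ‖(Bᴴ * (Wᴴ ⊗ₖ (1 : Matrix γ γ ℂ)) * A * M).trace‖ := by
        rw [trace_mul_ptraceSnd, ← Matrix.mul_assoc, ← Matrix.mul_assoc, trace_mul_comm]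
        simp only [Matrix.mul_assoc]
    _ ≤ ‖A‖ * ‖B‖ * traceNorm M :=
        (norm_trace_mul_le_traceNorm _ _).trans (by gcongr; exact traceNorm_nonneg M)

theorem inducedTraceNorm_le_of_stinespring [DecidableEq α] [DecidableEq β] [DecidableEq γ]
    (A B : Matrix (α × γ) β ℂ) (Φ : Matrix β β ℂ →ₗ[ℂ] Matrix α α ℂ)
    (hΦ : ∀ X, Φ X = ptraceSnd (A * X * Bᴴ)) :
    inducedTraceNorm Φ ≤ ‖A‖ * ‖B‖ := by
  refine Real.sSup_le ?_ (by positivity)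
  rintro _ ⟨X, hX, rfl⟩
  rw [hΦ]
  exact (traceNorm_ptraceSnd_le A B X).trans (mul_le_of_le_one_right (by positivity) hX)

theorem tensorId_eq_ptraceSnd [DecidableEq κ] (A B : Matrix (α × γ) β ℂ)
    (Φ : Matrix β β ℂ →ₗ[ℂ] Matrix α α ℂ) (hΦ : ∀ X, Φ X = ptraceSnd (A * X * Bᴴ))
    (M : Matrix (β × κ) (β × κ) ℂ) :
    tensorId κ Φ M = ptraceSnd
      ((A ⊗ₖ (1 : Matrix κ κ ℂ)).submatrix (Equiv.prodRightComm α κ γ) id * M *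
        ((B ⊗ₖ (1 : Matrix κ κ ℂ)).submatrix (Equiv.prodRightComm α κ γ) id)ᴴ) := by
  ext ⟨i, p⟩ ⟨j, q⟩
  simp only [tensorId, LinearMap.coe_mk, AddHom.coe_mk, of_apply, hΦ, ptraceSnd, mul_apply,
    submatrix_apply, conjTranspose_apply, kronecker_apply, one_apply, Equiv.prodRightComm,
    Equiv.coe_fn_mk, id_eq, Fintype.sum_prod_type]
  simp [Finset.sum_mul, mul_ite, apply_ite (starRingEnd ℂ)]

end PartialTrace

/-- Upper bound on the completely bounded trace norm from a Stinespring pair. -/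
theorem cb_trace_norm_le_stinespring {n m r : ℕ}
    (A B : Matrix (Fin m × Fin r) (Fin n) ℂ)
    (Φ : Matrix (Fin n) (Fin n) ℂ →ₗ[ℂ] Matrix (Fin m) (Fin m) ℂ)
    (hΦ : ∀ X : Matrix (Fin n) (Fin n) ℂ, Φ X = ptraceSnd (A * X * Bᴴ)) :
    diamondNorm Φ ≤ specNorm A * specNorm B := by
  refine Real.iSup_le (fun k => ?_) (mul_nonneg (norm_nonneg A) (norm_nonneg B))
  refine (inducedTraceNorm_le_of_stinespring _ _ _ (tensorId_eq_ptraceSnd A B Φ hΦ)).trans ?_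
  simp only [l2_opNorm_submatrix_equiv]
  exact mul_le_mul (l2_opNorm_kronecker_one_le A) (l2_opNorm_kronecker_one_le B)
    (norm_nonneg _) (norm_nonneg A)

end
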